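/- arXiv:1305.4927 — 3 statements merged into one kernel-verified Lean document; each statement's English description precedes it below -/
import Mathlib

section
/- Let B = curl A be a Beltrami field on Ω ⊆ ℝ³ with constant λ, and define the Noether energy-momentum tensor θ^i_j = (B_l - (λ/2)A_l) ε^{lik} ∂_j A_k - δ^i_j ((1/2)‖B‖² - (λ/2)A·B). Then ∂_i θ^i_j = (-curl B + λB)^k ∂_j A_k, and hence ∂_i θ^i_j = 0 for every solution of curl B = λ B. -/
open MeasureTheory

/-- Partial derivative `∂ᵢ f` on `ℝ³`. -/
noncomputable def pd (i : Fin 3) (f : (Fin 3 → ℝ) → ℝ) (x : Fin 3 → ℝ) : ℝ :=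
  fderiv ℝ f x (Pi.single i 1)

/-- Gradient on `ℝ³`. -/
noncomputable def vgrad (f : (Fin 3 → ℝ) → ℝ) (x : Fin 3 → ℝ) : Fin 3 → ℝ :=
  fun i => pd i f x

/-- Divergence on `ℝ³`. -/
noncomputable def vdiv (B : (Fin 3 → ℝ) → (Fin 3 → ℝ)) (x : Fin 3 → ℝ) : ℝ :=
  ∑ i, pd i (fun y => B y i) x

/-- Curl on `ℝ³`. -/
noncomputable def vcurl (B : (Fin 3 → ℝ) → (Fin 3 → ℝ)) (x : Fin 3 → ℝ) : Fin 3 → ℝ :=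
  ![pd 1 (fun y => B y 2) x - pd 2 (fun y => B y 1) x,
    pd 2 (fun y => B y 0) x - pd 0 (fun y => B y 2) x,
    pd 0 (fun y => B y 1) x - pd 1 (fun y => B y 0) x]

/-- Euclidean dot product on `ℝ³`. -/
def dot3 (u v : Fin 3 → ℝ) : ℝ := ∑ i, u i * v i

/-- Cross product on `ℝ³`. -/
def cross3 (u v : Fin 3 → ℝ) : Fin 3 → ℝ :=
  ![u 1 * v 2 - u 2 * v 1, u 2 * v 0 - u 0 * v 2, u 0 * v 1 - u 1 * v 0]

/-- Levi-Civita symbol on three indices. -/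
noncomputable def eps3 (i j k : Fin 3) : ℝ :=
  ((j.val : ℝ) - i.val) * ((k.val : ℝ) - j.val) * ((k.val : ℝ) - i.val) / 2

/-- Noether energy-momentum tensor
`θ^i_j = (B_l - (λ/2)A_l) ε^{lik} ∂_j A_k - δ^i_j ((1/2)‖B‖² - (λ/2)A·B)`
with `B = curl A`. -/
noncomputable def theta3 (lam : ℝ) (A : (Fin 3 → ℝ) → (Fin 3 → ℝ))
    (x : Fin 3 → ℝ) (i j : Fin 3) : ℝ :=
  (∑ l, ∑ k, (vcurl A x l - (lam/2) * A x l) * eps3 l i k * pd j (fun y => A y k) x)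
    - (if i = j then (1:ℝ) else 0) *
        ((1/2) * dot3 (vcurl A x) (vcurl A x) - (lam/2) * dot3 (A x) (vcurl A x))

/-!
With `B = curl A`, `P = B - (λ/2) A` and `L` the Lagrangian, contracting the Levi-Civita symbol
gives `θ^i_j = -(P × ∂_j A)_i - δ^i_j L`. Hence `∂_i θ^i_j = -div (P × ∂_j A) - ∂_j L`, and
`div (P × ∂_j A) = ∂_j A · curl P - P · curl ∂_j A`. Since mixed partials commute,
`curl ∂_j A = ∂_j B`, so `P · ∂_j B` cancels against the same term in
`∂_j L = P · ∂_j B - (λ/2) B · ∂_j A`, leaving `∂_j A · (-curl P + (λ/2) B) = ∂_j A · (-curl B + λ B)`.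
-/

noncomputable def vpd (j : Fin 3) (F : (Fin 3 → ℝ) → (Fin 3 → ℝ)) (x : Fin 3 → ℝ) : Fin 3 → ℝ :=
  fun k => pd j (fun y => F y k) x

section PartialDerivative

variable {f g : (Fin 3 → ℝ) → ℝ} {x : Fin 3 → ℝ} {i : Fin 3}

theorem pd_sub (hf : DifferentiableAt ℝ f x) (hg : DifferentiableAt ℝ g x) :
    pd i (fun y => f y - g y) x = pd i f x - pd i g x := by
  simp [pd, fderiv_fun_sub hf hg]

theorem pd_add (hf : DifferentiableAt ℝ f x) (hg : DifferentiableAt ℝ g x) :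
    pd i (fun y => f y + g y) x = pd i f x + pd i g x := by
  simp [pd, fderiv_fun_add hf hg]

theorem pd_mul (hf : DifferentiableAt ℝ f x) (hg : DifferentiableAt ℝ g x) :
    pd i (fun y => f y * g y) x = pd i f x * g x + f x * pd i g x := by
  simp [pd, fderiv_fun_mul hf hg]
  ring

theorem pd_const_mul (c : ℝ) (hf : DifferentiableAt ℝ f x) :
    pd i (fun y => c * f y) x = c * pd i f x := by
  simp [pd, fderiv_const_mul hf]

theorem pd_neg : pd i (fun y => -f y) x = -pd i f x := by
  simp [pd]

theorem contDiff_pd {n : WithTop ℕ∞} (hf : ContDiff ℝ (n + 1) f) (i : Fin 3) :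
    ContDiff ℝ n (pd i f) :=
  (hf.fderiv_right le_rfl).clm_apply contDiff_const

theorem pd_pd_comm (hf : ContDiffAt ℝ 2 f x) (i j : Fin 3) :
    pd i (pd j f) x = pd j (pd i f) x := by
  have hdf : DifferentiableAt ℝ (fderiv ℝ f) x :=
    (hf.fderiv_right (m := 1) le_rfl).differentiableAt one_ne_zero
  have hsymm : IsSymmSndFDerivAt ℝ f x :=
    hf.isSymmSndFDerivAt (by simp [minSmoothness_of_isRCLikeNormedField])
  have hcomp : ∀ v w : Fin 3 → ℝ,
      fderiv ℝ (fun y => fderiv ℝ f y w) x v = fderiv ℝ (fderiv ℝ f) x v w := by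
    intro v w
    simp [fderiv_clm_apply hdf (differentiableAt_const w)]
  unfold pd
  rw [hcomp, hcomp, hsymm.eq]

end PartialDerivative

theorem sum_mul_eps3_mul (u v : Fin 3 → ℝ) (i : Fin 3) :
    ∑ l, ∑ k, u l * eps3 l i k * v k = -cross3 u v i := by
  fin_cases i <;>
    simp only [eps3, cross3, Fin.sum_univ_three, Fin.val_zero, Fin.val_one, Fin.val_two,
      Fin.zero_eta, Fin.mk_one, Fin.reduceFinMk, Matrix.cons_val_zero, Matrix.cons_val_one,
      Matrix.cons_val] <;> ring

theorem sum_pd_kronecker_mul (f : (Fin 3 → ℝ) → ℝ) (j : Fin 3) (x : Fin 3 → ℝ) :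
    ∑ i, pd i (fun y => (if i = j then (1 : ℝ) else 0) * f y) x = pd j f x := by
  rw [Finset.sum_eq_single j (fun i _ hij => by simp [hij, pd]) (by simp)]
  simp

section VectorCalculus

variable {u v F G : (Fin 3 → ℝ) → (Fin 3 → ℝ)} {x : Fin 3 → ℝ}

theorem pd_dot3 (hu : DifferentiableAt ℝ u x) (hv : DifferentiableAt ℝ v x) (j : Fin 3) :
    pd j (fun y => dot3 (u y) (v y)) x = dot3 (vpd j u x) (v x) + dot3 (u x) (vpd j v x) := by
  simp (disch := fun_prop) only [dot3, vpd, Fin.sum_univ_three, pd_add, pd_mul]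
  ring

@[fun_prop]
theorem DifferentiableAt.dot3 (hu : DifferentiableAt ℝ u x) (hv : DifferentiableAt ℝ v x) :
    DifferentiableAt ℝ (fun y => dot3 (u y) (v y)) x := by
  unfold _root_.dot3
  fun_prop

theorem DifferentiableAt.cross3 (hu : DifferentiableAt ℝ u x) (hv : DifferentiableAt ℝ v x) :
    DifferentiableAt ℝ (fun y => cross3 (u y) (v y)) x := by
  refine differentiableAt_pi.2 fun i => ?_
  fin_cases i <;>
    simp only [_root_.cross3, Fin.zero_eta, Fin.mk_one, Fin.reduceFinMk, Matrix.cons_val_zero,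
      Matrix.cons_val_one, Matrix.cons_val] <;> fun_prop

theorem vdiv_cross3 (hF : DifferentiableAt ℝ F x) (hG : DifferentiableAt ℝ G x) :
    vdiv (fun y => cross3 (F y) (G y)) x = dot3 (G x) (vcurl F x) - dot3 (F x) (vcurl G x) := by
  simp (disch := fun_prop) only [vdiv, cross3, vcurl, dot3, Fin.sum_univ_three,
    Matrix.cons_val_zero, Matrix.cons_val_one, Matrix.cons_val, pd_sub, pd_mul]
  ring

theorem vcurl_sub_smul (hF : DifferentiableAt ℝ F x) (hG : DifferentiableAt ℝ G x) (c : ℝ) :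
    vcurl (fun y => F y - c • G y) x = vcurl F x - c • vcurl G x := by
  ext l
  fin_cases l <;>
    simp (disch := fun_prop) only [vcurl, Pi.sub_apply, Pi.smul_apply, smul_eq_mul, pd_sub,
      pd_const_mul, Fin.zero_eta, Fin.mk_one, Fin.reduceFinMk, Matrix.cons_val_zero,
      Matrix.cons_val_one, Matrix.cons_val] <;> ring

theorem contDiff_vcurl {n : WithTop ℕ∞} (hA : ContDiff ℝ (n + 1) u) : ContDiff ℝ n (vcurl u) := by
  have hpd (i k : Fin 3) : ContDiff ℝ n (pd i fun y => u y k) := contDiff_pd (contDiff_pi.1 hA k) i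
  refine contDiff_pi.2 fun l => ?_
  fin_cases l
  · exact (hpd 1 2).sub (hpd 2 1)
  · exact (hpd 2 0).sub (hpd 0 2)
  · exact (hpd 0 1).sub (hpd 1 0)

theorem vpd_vcurl (hu : ContDiff ℝ 2 u) (j : Fin 3) :
    vpd j (vcurl u) x = vcurl (vpd j u) x := by
  have hpd (i k : Fin 3) : Differentiable ℝ (pd i fun y => u y k) :=
    (contDiff_pd (n := 1) (contDiff_pi.1 hu k) i).differentiable one_ne_zero
  have hcomm (i k : Fin 3) := pd_pd_comm ((contDiff_pi.1 hu k).contDiffAt (x := x)) j i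
  ext l
  fin_cases l <;> simp [vpd, vcurl, pd_sub (hpd _ _ x) (hpd _ _ x), hcomm]

end VectorCalculus

theorem theta3_eq (lam : ℝ) (A : (Fin 3 → ℝ) → (Fin 3 → ℝ)) (x : Fin 3 → ℝ) (i j : Fin 3) :
    theta3 lam A x i j =
      -cross3 (vcurl A x - (lam / 2) • A x) (vpd j A x) i -
        (if i = j then (1 : ℝ) else 0) *
          ((1/2) * dot3 (vcurl A x) (vcurl A x) - (lam/2) * dot3 (A x) (vcurl A x)) := by
  rw [theta3, ← sum_mul_eps3_mul]
  rfl

theorem sum_pd_theta3 (A : (Fin 3 → ℝ) → (Fin 3 → ℝ)) (lam : ℝ) (hA : ContDiff ℝ 2 A)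
    (x : Fin 3 → ℝ) (j : Fin 3) :
    ∑ i, pd i (fun y => theta3 lam A y i j) x =
      ∑ k, (-(vcurl (vcurl A) x k) + lam * vcurl A x k) * pd j (fun y => A y k) x := by
  have hA' : Differentiable ℝ A := hA.differentiable two_ne_zero
  have hB : Differentiable ℝ (vcurl A) := (contDiff_vcurl (n := 1) hA).differentiable one_ne_zero
  have hdA : Differentiable ℝ (vpd j A) := differentiable_pi.2 fun k =>
    (contDiff_pd (n := 1) (contDiff_pi.1 hA k) j).differentiable one_ne_zero
  set P := fun y => vcurl A y - (lam / 2) • A y with hP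
  set L := fun y => (1/2) * dot3 (vcurl A y) (vcurl A y) - (lam/2) * dot3 (A y) (vcurl A y)
  have hPd : Differentiable ℝ P := by fun_prop
  have hcross (i : Fin 3) : DifferentiableAt ℝ (fun y => cross3 (P y) (vpd j A y) i) x :=
    differentiableAt_pi.1 ((hPd x).cross3 (hdA x)) i
  calc ∑ i, pd i (fun y => theta3 lam A y i j) x
      = ∑ i, (-pd i (fun y => cross3 (P y) (vpd j A y) i) x
          - pd i (fun y => (if i = j then (1 : ℝ) else 0) * L y) x) := by
        refine Finset.sum_congr rfl fun i _ => ?_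
        simp only [theta3_eq]
        rw [pd_sub (f := fun y => -cross3 (P y) (vpd j A y) i) (hcross i).neg (by fun_prop),
          pd_neg]
    _ = -vdiv (fun y => cross3 (P y) (vpd j A y)) x - pd j L x := by
        rw [Finset.sum_sub_distrib, sum_pd_kronecker_mul, Finset.sum_neg_distrib, vdiv]
    _ = -(dot3 (vpd j A x) (vcurl P x) - dot3 (P x) (vcurl (vpd j A) x)) - pd j L x := by
        rw [vdiv_cross3 (hPd x) (hdA x)]
    _ = _ := by
        rw [vcurl_sub_smul (hB x) (hA' x), ← vpd_vcurl hA, pd_sub, pd_const_mul, pd_const_mul,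
          pd_dot3 (hB x) (hB x), pd_dot3 (hA' x) (hB x)]
        · simp only [dot3, vpd, hP, Fin.sum_univ_three, Pi.sub_apply, Pi.smul_apply, smul_eq_mul]
          ring
        all_goals fun_prop

/-- `∂_i θ^i_j = (-curl B + λB)^k ∂_j A_k`, hence `∂_i θ^i_j = 0` for every
solution of the Beltrami equation `curl B = λB` (here `B = curl A`). -/
theorem stmt10 (A : (Fin 3 → ℝ) → (Fin 3 → ℝ)) (lam : ℝ) (hA : ContDiff ℝ 2 A) :
    (∀ x, ∀ j : Fin 3, ∑ i, pd i (fun y => theta3 lam A y i j) x =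
      ∑ k, (-(vcurl (vcurl A) x k) + lam * vcurl A x k) * pd j (fun y => A y k) x) ∧
    ((∀ x, vcurl (vcurl A) x = lam • vcurl A x) →
      ∀ x, ∀ j : Fin 3, ∑ i, pd i (fun y => theta3 lam A y i j) x = 0) := by
  refine ⟨sum_pd_theta3 A lam hA, fun hBeltrami x j => ?_⟩
  simp [sum_pd_theta3 A lam hA, hBeltrami]
end

section
/- Let F be a 2-form on ℝ^{1,3} (antisymmetric F_{μν}) and λ a 4-vector such that both ∇^ν F_{μν} = (1/2) ε_{μναβ} λ^ν F^{αβ} (covariant Beltrami equation) and F_α^μ ∇^ν F_{μν} = 0 hold at a point, with λ ≠ 0 at that point. Then ε^{μναβ} F_{μν} F_{αβ} = 0 at that point, i.e., E·B = 0 where E_i = F_{i0} and B_i = (1/2) ε_{ijk} F^{jk}. -/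
open MeasureTheory

/-- Partial derivative `∂_μ f` on `ℝ^{1,3}` (coordinates `Fin 4 → ℝ`). -/
noncomputable def pd4 (μ : Fin 4) (f : (Fin 4 → ℝ) → ℝ) (x : Fin 4 → ℝ) : ℝ :=
  fderiv ℝ f x (Pi.single μ 1)

/-- Diagonal Minkowski metric of signature `(1,3)`: `η = diag(1,-1,-1,-1)`. -/
noncomputable def eta : Fin 4 → ℝ := ![1, -1, -1, -1]

/-- Levi-Civita symbol on four indices, `ε_{0123} = 1`. -/
noncomputable def eps4 (μ ν α β : Fin 4) : ℝ :=
  ((ν.val : ℝ) - μ.val) * ((α.val : ℝ) - μ.val) * ((β.val : ℝ) - μ.val) *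
    ((α.val : ℝ) - ν.val) * ((β.val : ℝ) - ν.val) * ((β.val : ℝ) - α.val) / 12

/-!
The right-hand side of the Beltrami equation is `G = ⋆F λ`, and `F ⋆F` is `Pf F` times the
identity, where `Pf F = F₀₁F₂₃ - F₀₂F₁₃ + F₀₃F₁₂`. So the second equation reads `λ_α Pf F = 0`
for every `α`, whence `Pf F = 0`; both `ε^{μναβ} F_{μν} F_{αβ}` and `E·B` are multiples of `Pf F`.
-/

theorem exists_eq_sub_swap_of_antisymm {ι R : Type*} [DivisionRing R] [NeZero (2 : R)]
    {F : ι → ι → R} (hF : ∀ i j, F i j = -F j i) :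
    ∃ A : ι → ι → R, F = fun i j => A i j - A j i :=
  ⟨fun i j => F i j / 2, by
    funext i j
    show F i j = F i j / 2 - F j i / 2
    rw [hF j i, neg_div, sub_neg_eq_add, add_halves]⟩

def pfaffian4 (F : Fin 4 → Fin 4 → ℝ) : ℝ :=
  F 0 1 * F 2 3 - F 0 2 * F 1 3 + F 0 3 * F 1 2

section Antisymmetric

/- Writing `F = A - Aᵀ` turns each identity below into a polynomial identity in the free
entries of `A`. -/

variable {F : Fin 4 → Fin 4 → ℝ}

theorem sum_eps4_mul_mul_eq_eight_mul_pfaffian4 (hF : ∀ μ ν, F μ ν = -F ν μ) :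
    ∑ μ, ∑ ν, ∑ α, ∑ β, eps4 μ ν α β * F μ ν * F α β = 8 * pfaffian4 F := by
  obtain ⟨A, rfl⟩ := exists_eq_sub_swap_of_antisymm hF
  simp only [Fin.sum_univ_four, eps4, pfaffian4, Fin.isValue, Fin.coe_ofNat_eq_mod,
    Nat.reduceMod, Nat.cast_ofNat, Nat.cast_zero, Nat.cast_one]
  ring

theorem sum_electric_mul_magnetic_eq_neg_pfaffian4 (hF : ∀ μ ν, F μ ν = -F ν μ) :
    ∑ i : Fin 3, F i.succ 0 * ((1 / 2) * ∑ j, ∑ k, eps3 i j k * F j.succ k.succ) =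
      -pfaffian4 F := by
  obtain ⟨A, rfl⟩ := exists_eq_sub_swap_of_antisymm hF
  simp only [Fin.sum_univ_three, eps3, pfaffian4, Fin.succ, Fin.isValue, Fin.coe_ofNat_eq_mod,
    Nat.reduceMod, Nat.reduceAdd, Fin.reduceFinMk, Nat.cast_ofNat, Nat.cast_zero, Nat.cast_one]
  ring

theorem sum_mul_eta_mul_dual_contract_eq_mul_pfaffian4 (hF : ∀ μ ν, F μ ν = -F ν μ)
    (l : Fin 4 → ℝ) (α : Fin 4) :
    ∑ μ, F α μ * eta μ * ((1 / 2) * ∑ ν, ∑ α, ∑ β,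
      eps4 μ ν α β * (eta ν * l ν) * (eta α * eta β * F α β)) = l α * pfaffian4 F := by
  obtain ⟨A, rfl⟩ := exists_eq_sub_swap_of_antisymm hF
  fin_cases α <;>
    simp only [Fin.sum_univ_four, eps4, eta, pfaffian4, Fin.reduceFinMk, Fin.zero_eta,
      Fin.mk_one, Fin.isValue, Fin.coe_ofNat_eq_mod, Nat.reduceMod, Nat.cast_ofNat,
      Nat.cast_zero, Nat.cast_one, Matrix.cons_val] <;>
    ring

end Antisymmetric

/-- Pointwise consistency: if an antisymmetric `F_{μν}` and a covector `λ ≠ 0`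
satisfy the covariant Beltrami equation `G_μ := ∇^ν F_{μν} = ½ ε_{μναβ} λ^ν F^{αβ}`
together with `F_α{}^μ G_μ = 0`, then `ε^{μναβ} F_{μν} F_{αβ} = 0`,
i.e. `E·B = 0` where `E_i = F_{i0}` and `B_i = ½ ε_{ijk} F^{jk}`. -/
theorem stmt11 (F : Fin 4 → Fin 4 → ℝ) (hFa : ∀ μ ν, F μ ν = -F ν μ)
    (l G : Fin 4 → ℝ) (hl : l ≠ 0)
    (hBel : ∀ μ, G μ = (1/2) * ∑ ν, ∑ α, ∑ β,
      eps4 μ ν α β * (eta ν * l ν) * (eta α * eta β * F α β))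
    (hFG : ∀ α, (∑ μ, F α μ * eta μ * G μ) = 0) :
    (∑ μ, ∑ ν, ∑ α, ∑ β, eps4 μ ν α β * F μ ν * F α β) = 0 ∧
    (∑ i : Fin 3, F i.succ 0 *
      ((1/2) * ∑ j, ∑ k, eps3 i j k * F j.succ k.succ)) = 0 := by
  have hl_mul_pf : ∀ α, l α * pfaffian4 F = 0 := fun α => by
    rw [← sum_mul_eta_mul_dual_contract_eq_mul_pfaffian4 hFa, ← hFG α]
    simp only [hBel]
  have hpf : pfaffian4 F = 0 := by
    by_contra hpf
    exact hl (funext fun α => (mul_eq_zero.mp (hl_mul_pf α)).resolve_right hpf)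
  rw [sum_eps4_mul_mul_eq_eight_mul_pfaffian4 hFa, sum_electric_mul_magnetic_eq_neg_pfaffian4 hFa,
    hpf]
  exact ⟨mul_zero 8, neg_zero⟩
end

section
/- Let G be a compact Lie group with anti-hermitian generators T_a normalized by tr(T_a T_b) = -δ_{ab}, and let E_i, B_i be Lie-algebra-valued vectors. If the pair of equations λ^0 tr(E_i B^i) + ε_{ijk}λ^i tr(E^j E^k) = 0 and the trace of λ^j(E^i B_j - B_j E^i) - λ^0 ε^{ijk}B_j B_k + λ^i B_j E^j = 0 hold with λ ≠ 0, then tr(E_i B^i) = 0. Equivalently, the covariant non-abelian constraint ε^{μναβ} tr(F_{μν}F_{αβ}) = 0 follows, even though the matrix equation E_i B^i = 0 need not hold. -/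
open MeasureTheory

/-- Non-abelian consistency condition: for Lie-algebra (matrix) valued fields
`E_i, B_i` and `(λ⁰, λⁱ) ≠ 0` satisfying the traces of the two component
equations obtained from combining `F_α{}^μ D^ν F_{μν} = 0` with the non-abelian
Beltrami equation, one has `tr(E_i B^i) = 0`; equivalently, the covariant
constraint `ε^{μναβ} tr(F_{μν}F_{αβ}) = 0` follows (even though the matrix
equation `E_i B^i = 0` need not hold). -/
theorem stmt18 {m : ℕ} (E B : Fin 3 → Matrix (Fin m) (Fin m) ℂ)
    (l0 : ℝ) (l : Fin 3 → ℝ) (hl : ¬(l0 = 0 ∧ l = 0))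
    (h1 : (l0 : ℂ) * (∑ i, (E i * B i).trace) +
      (∑ i, ∑ j, ∑ k, ((eps3 i j k * l i : ℝ) : ℂ) * (E j * E k).trace) = 0)
    (h2 : ∀ i, (∑ j, (l j : ℂ) * (E i * B j - B j * E i).trace) -
      (l0 : ℂ) * (∑ j, ∑ k, ((eps3 i j k : ℝ) : ℂ) * (B j * B k).trace) +
      (l i : ℂ) * (∑ j, (B j * E j).trace) = 0) :
    (∑ i, (E i * B i).trace) = 0 ∧
    (∀ F : Fin 4 → Fin 4 → Matrix (Fin m) (Fin m) ℂ,
      (∀ μ ν, F μ ν = -F ν μ) →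
      (∀ i, F i.succ 0 = E i) →
      (∀ i, (2 : ℂ) • B i = ∑ j, ∑ k, ((eps3 i j k : ℝ) : ℂ) • F j.succ k.succ) →
      (∑ μ, ∑ ν, ∑ α, ∑ β,
        ((eps4 μ ν α β : ℝ) : ℂ) * (F μ ν * F α β).trace) = 0) := by
  have key : (∑ i, (E i * B i).trace) = 0 := by
    have cE : ∀ j k, (E j * E k).trace = (E k * E j).trace := fun j k => Matrix.trace_mul_comm _ _
    have cB : ∀ j k, (B j * B k).trace = (B k * B j).trace := fun j k => Matrix.trace_mul_comm _ _
    have cEB : ∀ i j, (E i * B j).trace = (B j * E i).trace := fun i j => Matrix.trace_mul_comm _ _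
    have h20 := h2 0; have h21 := h2 1; have h22 := h2 2
    simp only [Fin.sum_univ_three, eps3, Matrix.trace_sub] at h1 h20 h21 h22 ⊢
    norm_num at h1 h20 h21 h22
    set S := (E 0 * B 0).trace + (E 1 * B 1).trace + (E 2 * B 2).trace with hS
    have h1' : (l0:ℂ) * S = 0 := by
      linear_combination h1 - (l 0:ℂ)*cE 1 2 - (l 1:ℂ)*cE 2 0 - (l 2:ℂ)*cE 0 1
    have h2'0 : (l 0:ℂ) * S = 0 := by
      linear_combination h20 - (l 0:ℂ)*cEB 0 0 - (l 1:ℂ)*cEB 0 1 - (l 2:ℂ)*cEB 0 2 +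
        (l 0:ℂ)*(cEB 0 0 + cEB 1 1 + cEB 2 2) + (l0:ℂ)*cB 1 2
    have h2'1 : (l 1:ℂ) * S = 0 := by
      linear_combination h21 - (l 0:ℂ)*cEB 1 0 - (l 1:ℂ)*cEB 1 1 - (l 2:ℂ)*cEB 1 2 +
        (l 1:ℂ)*(cEB 0 0 + cEB 1 1 + cEB 2 2) + (l0:ℂ)*cB 2 0
    have h2'2 : (l 2:ℂ) * S = 0 := by
      linear_combination h22 - (l 0:ℂ)*cEB 2 0 - (l 1:ℂ)*cEB 2 1 - (l 2:ℂ)*cEB 2 2 +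
        (l 2:ℂ)*(cEB 0 0 + cEB 1 1 + cEB 2 2) + (l0:ℂ)*cB 0 1
    push_neg at hl
    by_cases hl0 : l0 = 0
    · have hlne : l ≠ 0 := hl hl0
      obtain ⟨i, hi⟩ := Function.ne_iff.mp hlne
      have hi' : (l i : ℂ) ≠ 0 := by exact_mod_cast hi
      fin_cases i
      · exact (mul_eq_zero.mp h2'0).resolve_left hi'
      · exact (mul_eq_zero.mp h2'1).resolve_left hi'
      · exact (mul_eq_zero.mp h2'2).resolve_left hi'
    · have : (l0 : ℂ) ≠ 0 := by exact_mod_cast hl0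
      exact (mul_eq_zero.mp h1').resolve_left this
  refine ⟨key, ?_⟩
  intro F hF hE hB
  have hS := key
  have two : (2:ℂ) ≠ 0 := two_ne_zero
  have hd : ∀ μ, F μ μ = 0 := by
    intro μ
    have h := hF μ μ
    have h2 : (2:ℂ) • F μ μ = 0 := by rw [two_smul]; nth_rewrite 1 [h]; simp
    simpa [two] using (smul_eq_zero.mp h2)
  have e0 : F 1 0 = E 0 := by simpa using hE 0
  have e1 : F 2 0 = E 1 := by simpa using hE 1
  have e2 : F 3 0 = E 2 := by simpa using hE 2
  have hBval : ∀ i, _ := fun i => hB i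
  have b0 : F 2 3 = B 0 := by
    have h := hB 0
    simp only [Fin.sum_univ_three, eps3, show (0:Fin 3).succ = 1 from rfl, show (1:Fin 3).succ = 2 from rfl, show (2:Fin 3).succ = 3 from rfl] at h
    norm_num at h
    have h23 := hF 3 2
    rw [h23] at h
    have : (2:ℂ) • B 0 = (2:ℂ) • F 2 3 := by
      rw [h]; module
    exact ((smul_right_injective _ two) this).symm
  have b1 : F 3 1 = B 1 := by
    have h := hB 1
    simp only [Fin.sum_univ_three, eps3, show (0:Fin 3).succ = 1 from rfl, show (1:Fin 3).succ = 2 from rfl, show (2:Fin 3).succ = 3 from rfl] at h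
    norm_num at h
    have h13 := hF 1 3
    rw [h13] at h
    have : (2:ℂ) • B 1 = (2:ℂ) • F 3 1 := by rw [h]; module
    exact ((smul_right_injective _ two) this).symm
  have b2 : F 1 2 = B 2 := by
    have h := hB 2
    simp only [Fin.sum_univ_three, eps3, show (0:Fin 3).succ = 1 from rfl, show (1:Fin 3).succ = 2 from rfl, show (2:Fin 3).succ = 3 from rfl] at h
    norm_num at h
    have h21 := hF 2 1
    rw [h21] at h
    have : (2:ℂ) • B 2 = (2:ℂ) • F 1 2 := by rw [h]; module
    exact ((smul_right_injective _ two) this).symm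
  have f01 : F 0 1 = -E 0 := by rw [hF 0 1, e0]
  have f02 : F 0 2 = -E 1 := by rw [hF 0 2, e1]
  have f03 : F 0 3 = -E 2 := by rw [hF 0 3, e2]
  have f21 : F 2 1 = -B 2 := by rw [hF 2 1, b2]
  have f13 : F 1 3 = -B 1 := by rw [hF 1 3, b1]
  have f32 : F 3 2 = -B 0 := by rw [hF 3 2, b0]
  have cEB : ∀ i j, (E i * B j).trace = (B j * E i).trace := fun i j => Matrix.trace_mul_comm _ _
  simp only [Fin.sum_univ_four, eps4, hd, e0, e1, e2, b0, b1, b2, f01, f02, f03, f21, f13, f32]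
  norm_num [Matrix.trace_neg, Matrix.trace_zero, show ((0:Fin 4):ℕ) = 0 from rfl, show ((1:Fin 4):ℕ) = 1 from rfl, show ((2:Fin 4):ℕ) = 2 from rfl, show ((3:Fin 4):ℕ) = 3 from rfl]
  rw [Fin.sum_univ_three] at hS
  linear_combination (-8:ℂ) * hS + (4:ℂ)*(cEB 0 0 + cEB 1 1 + cEB 2 2)
end
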